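/- Let M ⊆ ℝ³ be the set of triples (u,v,w) such that some product X^{s_1}Y^{t_1}⋯X^{s_N}Y^{t_N} with s_i, t_j ≥ 0, Σs_i = Σt_j = 1 equals (1,1,u,v,w) in coordinates. Then M is invariant under the maps a_t(u,v,w) = ((1-t)u−t, (1-t)²v−3t(1-t)u+t(2t−1), (1-t)w+t) and b_t(u,v,w) = ((1-t)u+t, (1-t)v+t, (1-t)²w+3t(1-t)u+t(2t−1)) for all t ∈ [0,1], and contains (−1,1,1) and (1,1,1). -/

import Mathlib

/-- The free 3-step nilpotent Lie algebra on two generators, in coordinates with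
respect to the basis `X, Y, (1/2)[X,Y], (1/12)[X,[X,Y]], (1/12)[Y,[Y,X]]`. -/
abbrev G5 : Type := ℝ × ℝ × ℝ × ℝ × ℝ

/-- The Lie bracket in these coordinates. -/
noncomputable def br (a b : G5) : G5 :=
  (0, 0, 2 * (a.1 * b.2.1 - a.2.1 * b.1), 6 * (a.1 * b.2.2.1 - a.2.2.1 * b.1),
    -6 * (a.2.1 * b.2.2.1 - a.2.2.1 * b.2.1))

/-- The group law given by the truncated BCH formula. -/
noncomputable def gmul (a b : G5) : G5 :=
  a + b + (1/2 : ℝ) • br a b + (1/12 : ℝ) • br a (br a b) + (1/12 : ℝ) • br b (br b a)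

noncomputable def Xg : G5 := (1, 0, 0, 0, 0)

noncomputable def Yg : G5 := (0, 1, 0, 0, 0)

/-- The value of the word `X^{s₁} Y^{t₁} ⋯ X^{s_N} Y^{t_N}` encoded by a list of
pairs of exponents. -/
noncomputable def wordProd (l : List (ℝ × ℝ)) : G5 :=
  l.foldl (fun g p => gmul (gmul g (p.1 • Xg)) (p.2 • Yg)) 0

noncomputable def a3 (t : ℝ) (p : ℝ × ℝ × ℝ) : ℝ × ℝ × ℝ :=
  ((1 - t) * p.1 - t, (1 - t)^2 * p.2.1 - 3 * t * (1 - t) * p.1 + t * (2 * t - 1),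
    (1 - t) * p.2.2 + t)

noncomputable def b3 (t : ℝ) (p : ℝ × ℝ × ℝ) : ℝ × ℝ × ℝ :=
  ((1 - t) * p.1 + t, (1 - t) * p.2.1 + t,
    (1 - t)^2 * p.2.2 + 3 * t * (1 - t) * p.1 + t * (2 * t - 1))

/-- The set of (u,v,w) reachable by admissible words. -/
noncomputable def Mset : Set (ℝ × ℝ × ℝ) :=
  {q | ∃ l : List (ℝ × ℝ), (∀ p ∈ l, 0 ≤ p.1 ∧ 0 ≤ p.2) ∧
    (l.map Prod.fst).sum = 1 ∧ (l.map Prod.snd).sum = 1 ∧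
    wordProd l = (1, 1, q.1, q.2.1, q.2.2)}

noncomputable def phiA (t : ℝ) (g : G5) : G5 :=
  ((1-t)*g.1, g.2.1, (1-t)*g.2.2.1, (1-t)^2*g.2.2.2.1, (1-t)*g.2.2.2.2)

noncomputable def phiB (t : ℝ) (g : G5) : G5 :=
  (g.1, (1-t)*g.2.1, (1-t)*g.2.2.1, (1-t)*g.2.2.2.1, (1-t)^2*g.2.2.2.2)

lemma phiA_gmul (t : ℝ) (a b : G5) : phiA t (gmul a b) = gmul (phiA t a) (phiA t b) := by
  obtain ⟨a1,a2,a3,a4,a5⟩ := a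
  obtain ⟨b1,b2,b3,b4,b5⟩ := b
  simp only [phiA, gmul, br, Prod.mk_add_mk, Prod.smul_mk, smul_eq_mul, Prod.mk.injEq]
  refine ⟨by ring, trivial, by ring, by ring, by ring⟩

lemma phiB_gmul (t : ℝ) (a b : G5) : phiB t (gmul a b) = gmul (phiB t a) (phiB t b) := by
  obtain ⟨a1,a2,a3,a4,a5⟩ := a
  obtain ⟨b1,b2,b3,b4,b5⟩ := b
  simp only [phiB, gmul, br, Prod.mk_add_mk, Prod.smul_mk, smul_eq_mul, Prod.mk.injEq]
  refine ⟨trivial, by ring, by ring, by ring, by ring⟩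

lemma gmul_zero (g : G5) : gmul g 0 = g := by
  obtain ⟨a1,a2,a3,a4,a5⟩ := g
  simp only [gmul, br]
  norm_num

lemma sum_map_mul (l : List (ℝ×ℝ)) (c : ℝ) :
    (l.map (fun p : ℝ × ℝ => c * p.1)).sum = c * (l.map Prod.fst).sum := by
  induction l with
  | nil => simp
  | cons p l ih => simp [ih, mul_add]

lemma sum_map_mul' (l : List (ℝ×ℝ)) (c : ℝ) :
    (l.map (fun p : ℝ × ℝ => c * p.2)).sum = c * (l.map Prod.snd).sum := by
  induction l with
  | nil => simp
  | cons p l ih => simp [ih, mul_add]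

lemma phiA_step (t : ℝ) (g : G5) (p : ℝ × ℝ) :
    phiA t (gmul (gmul g (p.1 • Xg)) (p.2 • Yg))
      = gmul (gmul (phiA t g) (((1-t) * p.1) • Xg)) (p.2 • Yg) := by
  rw [phiA_gmul, phiA_gmul]
  congr 1
  · congr 1
    simp [phiA, Xg, Prod.smul_mk]
  · simp [phiA, Yg, Prod.smul_mk]

lemma phiB_step (t : ℝ) (g : G5) (p : ℝ × ℝ) :
    phiB t (gmul (gmul g (p.1 • Xg)) (p.2 • Yg))
      = gmul (gmul (phiB t g) (p.1 • Xg)) (((1-t) * p.2) • Yg) := by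
  rw [phiB_gmul, phiB_gmul]
  congr 1
  · congr 1
    simp [phiB, Xg, Prod.smul_mk]
  · simp [phiB, Yg, Prod.smul_mk]

lemma wordProd_mapA (t : ℝ) (l : List (ℝ × ℝ)) :
    wordProd (l.map (fun p => ((1-t)*p.1, p.2))) = phiA t (wordProd l) := by
  suffices h : ∀ g : G5, (l.map (fun p => ((1-t)*p.1, p.2))).foldl
      (fun g p => gmul (gmul g (p.1 • Xg)) (p.2 • Yg)) (phiA t g)
      = phiA t (l.foldl (fun g p => gmul (gmul g (p.1 • Xg)) (p.2 • Yg)) g) by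
    have h0 : phiA t 0 = 0 := by simp [phiA]
    have := h 0
    rw [h0] at this
    simpa [wordProd] using this
  induction l with
  | nil => intro g; simp
  | cons p l ih =>
    intro g
    simp only [List.map_cons, List.foldl_cons]
    rw [← phiA_step, ih]

lemma wordProd_mapB (t : ℝ) (l : List (ℝ × ℝ)) :
    wordProd (l.map (fun p => (p.1, (1-t)*p.2))) = phiB t (wordProd l) := by
  suffices h : ∀ g : G5, (l.map (fun p => (p.1, (1-t)*p.2))).foldl
      (fun g p => gmul (gmul g (p.1 • Xg)) (p.2 • Yg)) (phiB t g)
      = phiB t (l.foldl (fun g p => gmul (gmul g (p.1 • Xg)) (p.2 • Yg)) g) by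
    have h0 : phiB t 0 = 0 := by simp [phiB]
    have := h 0
    rw [h0] at this
    simpa [wordProd] using this
  induction l with
  | nil => intro g; simp
  | cons p l ih =>
    intro g
    simp only [List.map_cons, List.foldl_cons]
    rw [← phiB_step, ih]

lemma wordProd_appendX (t : ℝ) (l : List (ℝ × ℝ)) :
    wordProd (l ++ [(t, 0)]) = gmul (wordProd l) (t • Xg) := by
  simp only [wordProd, List.foldl_append, List.foldl_cons, List.foldl_nil]
  rw [show ((t, (0:ℝ)) : ℝ × ℝ).2 • Yg = 0 by simp, gmul_zero]

lemma wordProd_appendY (t : ℝ) (l : List (ℝ × ℝ)) :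
    wordProd (l ++ [(0, t)]) = gmul (wordProd l) (t • Yg) := by
  simp only [wordProd, List.foldl_append, List.foldl_cons, List.foldl_nil]
  rw [show ((0:ℝ), t).1 • Xg = 0 by simp, gmul_zero]

theorem Mset_invariant :
    ((-1 : ℝ), (1 : ℝ), (1 : ℝ)) ∈ Mset ∧ ((1 : ℝ), (1 : ℝ), (1 : ℝ)) ∈ Mset ∧
      ∀ t : ℝ, 0 ≤ t → t ≤ 1 → ∀ q ∈ Mset, a3 t q ∈ Mset ∧ b3 t q ∈ Mset := by
  refine ⟨?_, ?_, ?_⟩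
  · refine ⟨[(0,1),(1,0)], by norm_num, by norm_num, by norm_num, ?_⟩
    simp only [wordProd, List.foldl_cons, List.foldl_nil, gmul, br, Xg, Yg,
      Prod.smul_mk, Prod.mk_add_mk, smul_eq_mul, Prod.mk.injEq]
    norm_num
  · refine ⟨[(1,1)], by norm_num, by norm_num, by norm_num, ?_⟩
    simp only [wordProd, List.foldl_cons, List.foldl_nil, gmul, br, Xg, Yg,
      Prod.smul_mk, Prod.mk_add_mk, smul_eq_mul, Prod.mk.injEq]
    norm_num
  · rintro t ht0 ht1 ⟨u, v, w⟩ ⟨l, hpos, hs, hty, hw⟩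
    have h1t : (0:ℝ) ≤ 1 - t := by linarith
    constructor
    · refine ⟨l.map (fun p => ((1-t)*p.1, p.2)) ++ [(t, 0)], ?_, ?_, ?_, ?_⟩
      · intro p hp
        rcases List.mem_append.1 hp with hp | hp
        · obtain ⟨q, hq, rfl⟩ := List.mem_map.1 hp
          exact ⟨mul_nonneg h1t (hpos q hq).1, (hpos q hq).2⟩
        · simp only [List.mem_singleton] at hp
          subst hp; exact ⟨ht0, le_refl 0⟩
      · rw [List.map_append, List.sum_append, List.map_map]
        have : (Prod.fst ∘ fun p : ℝ × ℝ => ((1-t)*p.1, p.2)) = fun p : ℝ × ℝ => (1-t)*p.1 := rfl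
        rw [this, sum_map_mul, hs]
        norm_num
      · rw [List.map_append, List.sum_append, List.map_map]
        have : (Prod.snd ∘ fun p : ℝ × ℝ => ((1-t)*p.1, p.2)) = Prod.snd := rfl
        rw [this, hty]
        norm_num
      · rw [wordProd_appendX, wordProd_mapA, hw]
        simp only [phiA, gmul, br, Xg, Prod.smul_mk, Prod.mk_add_mk, smul_eq_mul,
          a3, Prod.mk.injEq]
        norm_num
        refine ⟨by ring, by ring, by ring⟩
    · refine ⟨l.map (fun p => (p.1, (1-t)*p.2)) ++ [(0, t)], ?_, ?_, ?_, ?_⟩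
      · intro p hp
        rcases List.mem_append.1 hp with hp | hp
        · obtain ⟨q, hq, rfl⟩ := List.mem_map.1 hp
          exact ⟨(hpos q hq).1, mul_nonneg h1t (hpos q hq).2⟩
        · simp only [List.mem_singleton] at hp
          subst hp; exact ⟨le_refl 0, ht0⟩
      · rw [List.map_append, List.sum_append, List.map_map]
        have : (Prod.fst ∘ fun p : ℝ × ℝ => (p.1, (1-t)*p.2)) = Prod.fst := rfl
        rw [this, hs]
        norm_num
      · rw [List.map_append, List.sum_append, List.map_map]
        have : (Prod.snd ∘ fun p : ℝ × ℝ => (p.1, (1-t)*p.2)) = fun p : ℝ × ℝ => (1-t)*p.2 := rfl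
        rw [this, sum_map_mul', hty]
        norm_num
      · rw [wordProd_appendY, wordProd_mapB, hw]
        simp only [phiB, gmul, br, Yg, Prod.smul_mk, Prod.mk_add_mk, smul_eq_mul,
          b3, Prod.mk.injEq]
        norm_num
        refine ⟨by ring, by ring, by ring⟩
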